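/- Let K be a field of characteristic zero, q₁, q₂ ∈ K, and let α₁,…,α_n ∈ K be pairwise distinct. For each i set f_i(z) = ∏_{j≠i} (z − α_j), a one-variable polynomial. Then the iterated shuffle product f₁ * f₂ * ⋯ * f_n ∈ S_n is defined at the point (α₁,…,α_n) and its value there equals ((−1)^{n(n−1)/2} / n!) · ∏_{1≤i<j≤n} (α_i − q₁α_j)(α_i − q₂α_j). In particular, if α_i ≠ q₁α_j and α_i ≠ q₂α_j for all i < j, this value is nonzero. -/

import Mathlib

open MvPolynomial

noncomputable section ShuffleAlgebra

variable (K : Type) [Field K]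

/-- The field of rational functions in countably many variables `z 0, z 1, …` over `K`. -/
abbrev RF := FractionRing (MvPolynomial ℕ K)

/-- The variable `z i` as a rational function. -/
def Z (i : ℕ) : RF K := algebraMap (MvPolynomial ℕ K) (RF K) (X i)

/-- A constant, viewed as a rational function. -/
def cst (q : K) : RF K := algebraMap (MvPolynomial ℕ K) (RF K) (C q)

/-- Substitution `z i ↦ z (f i)` for an injective `f`, as a ring homomorphism of
rational functions. -/
def ren (f : ℕ → ℕ) (hf : Function.Injective f) : RF K →+* RF K :=
  IsFractionRing.lift (g := (algebraMap (MvPolynomial ℕ K) (RF K)).comp (rename f).toRingHom)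
    ((IsFractionRing.injective (MvPolynomial ℕ K) (RF K)).comp (rename_injective f hf))

/-- A permutation of `Fin k` extended (by the identity) to a permutation of `ℕ`. -/
def natPerm (k : ℕ) (σ : Equiv.Perm (Fin k)) : Equiv.Perm ℕ :=
  σ.extendDomain Fin.equivSubtype

/-- `Alt_{S_k}(F) = (1/k!) ∑_{σ ∈ S_k} sgn(σ) F(z_{σ(1)},…,z_{σ(k)})`. -/
def Alt (k : ℕ) (F : RF K) : RF K :=
  (k.factorial : RF K)⁻¹ *
    ∑ σ : Equiv.Perm (Fin k),
      ((Equiv.Perm.sign σ : ℤ) : RF K) * ren K (natPerm k σ) (natPerm k σ).injective F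

variable (q₁ q₂ : K)

/-- `μ(x,y) = (x − q₁y)(x − q₂y)/(x − y)²`. -/
def mu (x y : RF K) : RF K := (x - cst K q₁ * y) * (x - cst K q₂ * y) / (x - y) ^ 2

/-- The shuffle product of `F` (a function of `z 0, …, z (n-1)`) and `G`
(a function of `z 0, …, z (m-1)`). -/
def shuffle (n m : ℕ) (F G : RF K) : RF K :=
  Alt K (n + m) (F * ren K (· + n) (add_left_injective n) G *
    ∏ i : Fin n, ∏ j : Fin m, mu K q₁ q₂ (Z K i.val) (Z K (n + j.val)))

/-- The Vandermonde determinant `Δ_n = ∏_{i<j} (z i − z j)`. -/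
def vand (n : ℕ) : RF K :=
  algebraMap (MvPolynomial ℕ K) (RF K)
    (∏ j ∈ Finset.range n, ∏ i ∈ Finset.range j, (X i - X j))

/-- `f` is a symmetric Laurent polynomial in the variables `z 0, …, z (n-1)`. -/
def IsSymLaurent (n : ℕ) (f : RF K) : Prop :=
  (∃ (p : MvPolynomial ℕ K) (N : ℕ), (↑p.vars : Set ℕ) ⊆ Set.Iio n ∧
      f * algebraMap (MvPolynomial ℕ K) (RF K) ((∏ i ∈ Finset.range n, X i) ^ N)
        = algebraMap (MvPolynomial ℕ K) (RF K) p) ∧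
  ∀ σ : Equiv.Perm (Fin n), ren K (natPerm n σ) (natPerm n σ).injective f = f

/-- The `n`-th graded component `S_n` of the shuffle algebra: quotients `f/Δ_n` with
`f` a symmetric Laurent polynomial in `z 0, …, z (n-1)`. -/
def Sgr (n : ℕ) : Set (RF K) :=
  {F | ∃ f : RF K, IsSymLaurent K n f ∧ F = f / vand K n}

/-- Iterated (left-to-right) shuffle product of a list of elements of `S₁`. -/
def iterSh (l : List (RF K)) : RF K :=
  (l.foldl (fun acc f => (shuffle K q₁ q₂ acc.2 1 acc.1 f, acc.2 + 1)) ((1 : RF K), 0)).1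

/-- The iterated shuffle product `z^{i₁} * ⋯ * z^{i_n}`. -/
def zpows (l : List ℤ) : RF K := iterSh K q₁ q₂ (l.map fun i => Z K 0 ^ i)

/-- `F` is defined at the point `α` and its value there is `v`. -/
def EvalAt (α : ℕ → K) (F : RF K) (v : K) : Prop :=
  ∃ p q : MvPolynomial ℕ K, eval α q ≠ 0 ∧
    F * algebraMap (MvPolynomial ℕ K) (RF K) q = algebraMap (MvPolynomial ℕ K) (RF K) p ∧
    eval α p = v * eval α q

end ShuffleAlgebra

/-!
Writing `g₁ * ⋯ * gₙ` as a single alternation `Alt_{S_n}(∏ᵢ gᵢ(zᵢ) ∏_{i<j} μ(zᵢ, zⱼ))`, every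
summand can be evaluated at the point `(α_{σ(1)}, …, α_{σ(n)})`, where all the `μ` are regular
because the `αᵢ` are distinct. Since `fᵢ` vanishes at every `αⱼ` with `j ≠ i`, only `σ = 1`
survives, and there `∏ᵢ fᵢ(αᵢ) = (−1)^{n(n−1)/2} ∏_{i<j} (αᵢ − αⱼ)²` cancels the denominators of
the `μ(αᵢ, αⱼ)`.
-/

open MvPolynomial Finset

section Renaming

variable {K : Type} [Field K]

theorem ren_algebraMap (f : ℕ → ℕ) (hf : Function.Injective f) (p : MvPolynomial ℕ K) :
    ren K f hf (algebraMap (MvPolynomial ℕ K) (RF K) p)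
      = algebraMap (MvPolynomial ℕ K) (RF K) (rename f p) :=
  IsLocalization.lift_eq _ _

theorem ren_ren (f g : ℕ → ℕ) (hf : Function.Injective f) (hg : Function.Injective g)
    (F : RF K) : ren K f hf (ren K g hg F) = ren K (f ∘ g) (hf.comp hg) F := by
  suffices (ren K f hf).comp (ren K g hg) = ren K (f ∘ g) (hf.comp hg) from
    DFunLike.congr_fun this F
  refine IsLocalization.ringHom_ext (nonZeroDivisors (MvPolynomial ℕ K)) (RingHom.ext fun p => ?_)
  simp only [RingHom.comp_apply, ren_algebraMap, rename_rename]

theorem ren_congr {f g : ℕ → ℕ} (hf : Function.Injective f) (hg : Function.Injective g)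
    (h : f = g) (F : RF K) : ren K f hf F = ren K g hg F := by
  subst h; rfl

theorem ren_Z (f : ℕ → ℕ) (hf : Function.Injective f) (i : ℕ) :
    ren K f hf (Z K i) = Z K (f i) := by
  rw [Z, ren_algebraMap, rename_X, Z]

theorem ren_cst (f : ℕ → ℕ) (hf : Function.Injective f) (q : K) :
    ren K f hf (cst K q) = cst K q := by
  rw [cst, ren_algebraMap, rename_C]

theorem ren_mu (q₁ q₂ : K) (f : ℕ → ℕ) (hf : Function.Injective f) (a b : ℕ) :
    ren K f hf (mu K q₁ q₂ (Z K a) (Z K b)) = mu K q₁ q₂ (Z K (f a)) (Z K (f b)) := by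
  simp only [mu, map_div₀, map_mul, map_sub, map_pow, ren_Z, ren_cst]

theorem natPerm_apply_of_lt {k : ℕ} (σ : Equiv.Perm (Fin k)) {x : ℕ} (h : x < k) :
    natPerm k σ x = σ ⟨x, h⟩ := by
  simpa [natPerm, Fin.equivSubtype] using
    Equiv.Perm.extendDomain_apply_subtype σ (Fin.equivSubtype (n := k)) (b := x) h

theorem natPerm_apply_of_le {k : ℕ} (σ : Equiv.Perm (Fin k)) {x : ℕ} (h : k ≤ x) :
    natPerm k σ x = x :=
  Equiv.Perm.extendDomain_apply_not_subtype _ _ (Nat.not_lt.mpr h)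

theorem natPerm_mul (k : ℕ) (σ τ : Equiv.Perm (Fin k)) :
    natPerm k σ * natPerm k τ = natPerm k (σ * τ) :=
  Equiv.Perm.extendDomain_mul _ _ _

theorem natPerm_extendDomain_castLEquiv {n k : ℕ} (h : n ≤ k) (σ : Equiv.Perm (Fin n)) :
    natPerm k (σ.extendDomain (Fin.castLEquiv h)) = natPerm n σ := by
  ext x
  rcases lt_or_ge x n with hxn | hxn
  · rw [natPerm_apply_of_lt _ (hxn.trans_le h), natPerm_apply_of_lt _ hxn,
      Equiv.Perm.extendDomain_apply_subtype σ (Fin.castLEquiv h)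
        (b := (⟨x, hxn.trans_le h⟩ : Fin k)) hxn]
    rfl
  rcases lt_or_ge x k with hxk | hxk
  · rw [natPerm_apply_of_lt _ hxk, natPerm_apply_of_le _ hxn,
      Equiv.Perm.extendDomain_apply_not_subtype σ (Fin.castLEquiv h)
        (b := (⟨x, hxk⟩ : Fin k)) (Nat.not_lt.mpr hxn)]
  · rw [natPerm_apply_of_le _ hxk, natPerm_apply_of_le _ hxn]

end Renaming

section Alternation

variable {K : Type} [Field K]

theorem Alt_ren_natPerm (k : ℕ) (τ : Equiv.Perm (Fin k)) (F : RF K) :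
    Alt K k (ren K (natPerm k τ) (natPerm k τ).injective F)
      = (Equiv.Perm.sign τ : ℤ) * Alt K k F := by
  unfold Alt
  rw [mul_left_comm]
  congr 1
  rw [mul_sum]
  refine Fintype.sum_equiv (Equiv.mulRight τ) _ _ fun σ => ?_
  rw [ren_ren, ren_congr _ (natPerm k (σ * τ)).injective (by rw [← natPerm_mul]; rfl),
    Equiv.coe_mulRight, ← mul_assoc, ← Int.cast_mul, ← Units.val_mul, map_mul,
    mul_left_comm, Int.units_mul_self, mul_one]

theorem Alt_ren_natPerm_of_le {n k : ℕ} (h : n ≤ k) (σ : Equiv.Perm (Fin n)) (F : RF K) :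
    Alt K k (ren K (natPerm n σ) (natPerm n σ).injective F)
      = (Equiv.Perm.sign σ : ℤ) * Alt K k F := by
  rw [← ren_congr (natPerm k _).injective _ (congrArg _ (natPerm_extendDomain_castLEquiv h σ)),
    Alt_ren_natPerm, Equiv.Perm.sign_extendDomain]

theorem Alt_mul_of_forall_ren_eq (k : ℕ) {r : RF K}
    (hr : ∀ σ : Equiv.Perm (Fin k), ren K (natPerm k σ) (natPerm k σ).injective r = r)
    (H : RF K) : Alt K k (r * H) = r * Alt K k H := by
  simp only [Alt, map_mul, hr, mul_sum]
  refine sum_congr rfl fun σ _ => ?_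
  ring

theorem Alt_intCast_mul (k : ℕ) (c : ℤ) (H : RF K) : Alt K k (c * H) = c * Alt K k H :=
  Alt_mul_of_forall_ren_eq k (fun _ => map_intCast _ c) H

theorem Alt_natCast_inv_mul (k c : ℕ) (H : RF K) :
    Alt K k ((c : RF K)⁻¹ * H) = (c : RF K)⁻¹ * Alt K k H :=
  Alt_mul_of_forall_ren_eq k (fun _ => by rw [map_inv₀, map_natCast]) H

theorem Alt_sum {ι : Type} (k : ℕ) (s : Finset ι) (F : ι → RF K) :
    Alt K k (∑ i ∈ s, F i) = ∑ i ∈ s, Alt K k (F i) := by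
  simp only [Alt, map_sum, mul_sum]
  exact sum_comm

theorem Alt_zero_one : Alt K 0 (1 : RF K) = 1 := by
  simp [Alt]

theorem Alt_Alt_mul [CharZero K] {n k : ℕ} (h : n ≤ k) (F : RF K) {G : RF K}
    (hG : ∀ σ : Equiv.Perm (Fin n), ren K (natPerm n σ) (natPerm n σ).injective G = G) :
    Alt K k (Alt K n F * G) = Alt K k (F * G) := by
  have hterm : ∀ σ : Equiv.Perm (Fin n),
      Alt K k ((Equiv.Perm.sign σ : ℤ) * ren K (natPerm n σ) (natPerm n σ).injective (F * G))
        = Alt K k (F * G) := fun σ => by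
    rw [Alt_intCast_mul, Alt_ren_natPerm_of_le h, ← mul_assoc, ← Int.cast_mul,
      ← Units.val_mul, Int.units_mul_self, Units.val_one, Int.cast_one, one_mul]
  have hfac : (n.factorial : RF K) ≠ 0 := by exact_mod_cast n.factorial_ne_zero
  have hsum : Alt K n F * G = (n.factorial : RF K)⁻¹ * ∑ σ : Equiv.Perm (Fin n),
      (Equiv.Perm.sign σ : ℤ) * ren K (natPerm n σ) (natPerm n σ).injective (F * G) := by
    simp only [Alt, map_mul, hG, sum_mul, mul_sum, mul_assoc]
  rw [hsum, Alt_natCast_inv_mul, Alt_sum, sum_congr rfl fun σ _ => hterm σ,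
    sum_const, card_univ, Fintype.card_perm, Fintype.card_fin, nsmul_eq_mul,
    inv_mul_cancel_left₀ hfac]

end Alternation

section Evaluation

variable {K : Type} [Field K] {α : ℕ → K}

theorem EvalAt.congr_value {F : RF K} {v w : K} (h : EvalAt K α F v) (hvw : v = w) :
    EvalAt K α F w :=
  hvw ▸ h

theorem EvalAt_algebraMap (α : ℕ → K) (p : MvPolynomial ℕ K) :
    EvalAt K α (algebraMap (MvPolynomial ℕ K) (RF K) p) (eval α p) :=
  ⟨p, 1, by simp, by simp, by simp⟩

theorem EvalAt_Z (α : ℕ → K) (i : ℕ) : EvalAt K α (Z K i) (α i) := by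
  simpa [Z] using EvalAt_algebraMap α (X i)

theorem EvalAt_cst (α : ℕ → K) (c : K) : EvalAt K α (cst K c) c := by
  simpa [cst] using EvalAt_algebraMap α (C c)

theorem EvalAt_intCast (α : ℕ → K) (c : ℤ) : EvalAt K α (c : RF K) (c : K) := by
  simpa using EvalAt_algebraMap α c

theorem EvalAt_natCast (α : ℕ → K) (c : ℕ) : EvalAt K α (c : RF K) (c : K) := by
  simpa using EvalAt_algebraMap α c

theorem EvalAt.mul {F G : RF K} {v w : K} (hF : EvalAt K α F v) (hG : EvalAt K α G w) :
    EvalAt K α (F * G) (v * w) := by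
  obtain ⟨p₁, q₁, hq₁, e₁, v₁⟩ := hF
  obtain ⟨p₂, q₂, hq₂, e₂, v₂⟩ := hG
  refine ⟨p₁ * p₂, q₁ * q₂, by simp [hq₁, hq₂], ?_,
    by simp only [map_mul, v₁, v₂]; ring⟩
  rw [map_mul, map_mul, ← e₁, ← e₂]
  ring

theorem EvalAt.add {F G : RF K} {v w : K} (hF : EvalAt K α F v) (hG : EvalAt K α G w) :
    EvalAt K α (F + G) (v + w) := by
  obtain ⟨p₁, q₁, hq₁, e₁, v₁⟩ := hF
  obtain ⟨p₂, q₂, hq₂, e₂, v₂⟩ := hG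
  refine ⟨p₁ * q₂ + p₂ * q₁, q₁ * q₂, by simp [hq₁, hq₂], ?_,
    by simp only [map_mul, map_add, v₁, v₂]; ring⟩
  rw [map_add, map_mul, map_mul, map_mul, ← e₁, ← e₂]
  ring

theorem EvalAt.neg {F : RF K} {v : K} (hF : EvalAt K α F v) : EvalAt K α (-F) (-v) := by
  obtain ⟨p, q, hq, e, hv⟩ := hF
  exact ⟨-p, q, hq, by rw [neg_mul, e, map_neg], by rw [map_neg, hv, neg_mul]⟩

theorem EvalAt.sub {F G : RF K} {v w : K} (hF : EvalAt K α F v) (hG : EvalAt K α G w) :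
    EvalAt K α (F - G) (v - w) := by
  simpa only [sub_eq_add_neg] using hF.add hG.neg

theorem EvalAt.inv {F : RF K} {v : K} (hF : EvalAt K α F v) (hv : v ≠ 0) :
    EvalAt K α F⁻¹ v⁻¹ := by
  obtain ⟨p, q, hq, e, hpq⟩ := hF
  have hp : algebraMap (MvPolynomial ℕ K) (RF K) p ≠ 0 := by
    refine (map_ne_zero_iff _ (IsFractionRing.injective _ _)).mpr fun hp => ?_
    rw [hp, map_zero] at hpq
    exact mul_ne_zero hv hq hpq.symm
  have hF0 : F ≠ 0 := by rintro rfl; rw [zero_mul] at e; exact hp e.symm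
  refine ⟨q, p, by rw [hpq]; exact mul_ne_zero hv hq, ?_,
    by rw [hpq, inv_mul_cancel_left₀ hv]⟩
  rw [← e, inv_mul_cancel_left₀ hF0]

theorem EvalAt.div {F G : RF K} {v w : K} (hF : EvalAt K α F v) (hG : EvalAt K α G w)
    (hw : w ≠ 0) : EvalAt K α (F / G) (v / w) :=
  by simpa only [div_eq_mul_inv] using hF.mul (hG.inv hw)

theorem EvalAt_sum {ι : Type} (s : Finset ι) {F : ι → RF K} {v : ι → K}
    (h : ∀ i ∈ s, EvalAt K α (F i) (v i)) :
    EvalAt K α (∑ i ∈ s, F i) (∑ i ∈ s, v i) := by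
  classical
  induction s using Finset.induction_on with
  | empty => simpa using EvalAt_algebraMap α 0
  | insert a s ha ih =>
    rw [sum_insert ha, sum_insert ha]
    exact (h a (mem_insert_self a s)).add (ih fun i hi => h i (mem_insert_of_mem hi))

theorem EvalAt_prod {ι : Type} (s : Finset ι) {F : ι → RF K} {v : ι → K}
    (h : ∀ i ∈ s, EvalAt K α (F i) (v i)) :
    EvalAt K α (∏ i ∈ s, F i) (∏ i ∈ s, v i) := by
  classical
  induction s using Finset.induction_on with
  | empty => simpa using EvalAt_algebraMap α 1
  | insert a s ha ih =>
    rw [prod_insert ha, prod_insert ha]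
    exact (h a (mem_insert_self a s)).mul (ih fun i hi => h i (mem_insert_of_mem hi))

theorem EvalAt_ren {F : RF K} {v : K} (f : ℕ → ℕ) (hf : Function.Injective f)
    (h : EvalAt K (α ∘ f) F v) : EvalAt K α (ren K f hf F) v := by
  obtain ⟨p, q, hq, e, hv⟩ := h
  refine ⟨rename f p, rename f q, by rwa [eval_rename], ?_,
    by rw [eval_rename, eval_rename, hv]⟩
  rw [← ren_algebraMap f hf, ← ren_algebraMap f hf, ← map_mul, e]

theorem EvalAt_prod_Z_zero_sub_cst {ι : Type} (s : Finset ι) (c : ι → K) :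
    EvalAt K α (∏ j ∈ s, (Z K 0 - cst K (c j))) (∏ j ∈ s, (α 0 - c j)) :=
  EvalAt_prod s fun j _ => (EvalAt_Z α 0).sub (EvalAt_cst α (c j))

theorem EvalAt_Alt [CharZero K] {k : ℕ} {F : RF K} {v : Equiv.Perm (Fin k) → K}
    (h : ∀ σ, EvalAt K (α ∘ natPerm k σ) F (v σ)) :
    EvalAt K α (Alt K k F)
      ((k.factorial : K)⁻¹ * ∑ σ : Equiv.Perm (Fin k), (Equiv.Perm.sign σ : ℤ) * v σ) :=
  ((EvalAt_natCast α _).inv (by exact_mod_cast k.factorial_ne_zero)).mul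
    (EvalAt_sum _ fun σ _ => (EvalAt_intCast α _).mul (EvalAt_ren _ _ (h σ)))

theorem EvalAt_mu (q₁ q₂ : K) {a b : ℕ} (hab : α a ≠ α b) :
    EvalAt K α (mu K q₁ q₂ (Z K a) (Z K b))
      ((α a - q₁ * α b) * (α a - q₂ * α b) / (α a - α b) ^ 2) := by
  have hZ := EvalAt_Z α
  refine (((hZ a).sub ((EvalAt_cst α q₁).mul (hZ b))).mul
    ((hZ a).sub ((EvalAt_cst α q₂).mul (hZ b)))).div ?_ (pow_ne_zero 2 (sub_ne_zero.mpr hab))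
  simpa only [sq] using ((hZ a).sub (hZ b)).mul ((hZ a).sub (hZ b))

end Evaluation

section IteratedShuffle

variable {K : Type} [Field K] (q₁ q₂ : K)

noncomputable def iterShKernel (n : ℕ) (g : Fin n → RF K) : RF K :=
  (∏ i : Fin n, ren K (· + (i : ℕ)) (add_left_injective _) (g i)) *
    ∏ j : Fin n, ∏ i ∈ Iio j, mu K q₁ q₂ (Z K i) (Z K j)

theorem iterShKernel_succ (n : ℕ) (g : Fin (n + 1) → RF K) :
    iterShKernel q₁ q₂ (n + 1) g = iterShKernel q₁ q₂ n (fun i => g i.castSucc) *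
      (ren K (· + n) (add_left_injective n) (g (Fin.last n)) *
        ∏ i : Fin n, mu K q₁ q₂ (Z K i) (Z K n)) := by
  simp only [iterShKernel, Fin.prod_univ_castSucc, Fin.prod_Iio_castSucc, Fin.Iio_last_eq_map,
    prod_map, Fin.coe_castSuccEmb, Fin.val_castSucc, Fin.val_last]
  ring

theorem foldl_shuffle_snd (l : List (RF K)) (F : RF K) (c : ℕ) :
    (l.foldl (fun acc f => (shuffle K q₁ q₂ acc.2 1 acc.1 f, acc.2 + 1)) (F, c)).2
      = c + l.length := by
  induction l generalizing F c with
  | nil => rfl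
  | cons x l ih => rw [List.foldl_cons, ih, List.length_cons]; omega

theorem iterSh_append_singleton (l : List (RF K)) (x : RF K) :
    iterSh K q₁ q₂ (l ++ [x]) = shuffle K q₁ q₂ l.length 1 (iterSh K q₁ q₂ l) x := by
  rw [iterSh, List.foldl_append, List.foldl_cons, List.foldl_nil, iterSh,
    foldl_shuffle_snd, zero_add]

theorem shuffle_one_right (n : ℕ) (F G : RF K) :
    shuffle K q₁ q₂ n 1 F G = Alt K (n + 1) (F *
      (ren K (· + n) (add_left_injective n) G * ∏ i : Fin n, mu K q₁ q₂ (Z K i) (Z K n))) := by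
  simp only [shuffle, Fin.prod_univ_one, Fin.val_zero, add_zero, mul_assoc]

theorem ren_natPerm_shift_mul_prod_mu (n : ℕ) (σ : Equiv.Perm (Fin n)) (G : RF K) :
    ren K (natPerm n σ) (natPerm n σ).injective
        (ren K (· + n) (add_left_injective n) G * ∏ i : Fin n, mu K q₁ q₂ (Z K i) (Z K n))
      = ren K (· + n) (add_left_injective n) G *
          ∏ i : Fin n, mu K q₁ q₂ (Z K i) (Z K n) := by
  have hshift : natPerm n σ ∘ (· + n) = (· + n) :=
    funext fun y => natPerm_apply_of_le σ (Nat.le_add_left n y)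
  rw [map_mul, ren_ren, ren_congr _ (add_left_injective n) hshift, map_prod]
  congr 1
  simp only [ren_mu, natPerm_apply_of_lt σ (Fin.is_lt _), natPerm_apply_of_le σ le_rfl]
  exact Equiv.prod_comp σ fun i => mu K q₁ q₂ (Z K i) (Z K n)

theorem iterSh_ofFn_eq_Alt [CharZero K] (n : ℕ) (g : Fin n → RF K) :
    iterSh K q₁ q₂ (List.ofFn g) = Alt K n (iterShKernel q₁ q₂ n g) := by
  induction n with
  | zero =>
    simp only [List.ofFn_zero, iterShKernel, univ_eq_empty, prod_empty, mul_one]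
    exact Alt_zero_one.symm
  | succ n ih =>
    rw [List.ofFn_succ', List.concat_eq_append, iterSh_append_singleton, List.length_ofFn, ih,
      shuffle_one_right, Alt_Alt_mul n.le_succ _ (ren_natPerm_shift_mul_prod_mu q₁ q₂ n · _),
      iterShKernel_succ]

end IteratedShuffle

section Value

theorem prod_prod_erase_sub_eq_zero {ι R : Type} [Fintype ι] [DecidableEq ι] [CommRing R]
    (a : ι → R) {σ : Equiv.Perm ι} (hσ : σ ≠ 1) :
    ∏ i, ∏ j ∈ univ.erase i, (a (σ i) - a j) = 0 := by
  obtain ⟨i, hi⟩ : ∃ i, σ i ≠ i := not_forall.mp fun h => hσ (Equiv.ext h)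
  exact prod_eq_zero (mem_univ i) (prod_eq_zero (mem_erase.mpr ⟨hi, mem_univ _⟩) (sub_self _))

theorem prod_prod_erase_sub {R : Type} [CommRing R] {n : ℕ} (a : Fin n → R) :
    ∏ i, ∏ j ∈ univ.erase i, (a i - a j)
      = (-1) ^ (n * (n - 1) / 2) * ∏ j, ∏ i ∈ Iio j, (a i - a j) ^ 2 :=
  calc ∏ i, ∏ j ∈ univ.erase i, (a i - a j)
      = ∏ i, ∏ j ∈ Ioi i, (a i - a j) * (a j - a i) := by
        rw [prod_prod_Ioi_mul_eq_prod_prod_off_diag (fun j i => a i - a j)]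
        simp only [compl_singleton]
    _ = ∏ j, ∏ i ∈ Iio j, -1 * (a i - a j) ^ 2 := by
        rw [prod_comm' (t' := univ) (s' := fun j => Iio j) (by simp)]
        exact prod_congr rfl fun j _ => prod_congr rfl fun i _ => by ring
    _ = (-1) ^ (n * (n - 1) / 2) * ∏ j, ∏ i ∈ Iio j, (a i - a j) ^ 2 := by
        simp only [prod_mul_distrib, prod_const, Fin.card_Iio, prod_pow_eq_pow_sum,
          Fin.sum_univ_eq_sum_range (fun j => j) n, sum_range_id]

theorem prod_prod_erase_sub_mul_prod_prod_div {K : Type} [Field K] {n : ℕ} {a : Fin n → K}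
    (ha : Function.Injective a) (u : Fin n → Fin n → K) :
    (∏ i, ∏ j ∈ univ.erase i, (a i - a j)) * ∏ j, ∏ i ∈ Iio j, u i j / (a i - a j) ^ 2
      = (-1) ^ (n * (n - 1) / 2) * ∏ j, ∏ i ∈ Iio j, u i j := by
  rw [prod_prod_erase_sub, mul_assoc, ← prod_mul_distrib]
  congr 1
  refine prod_congr rfl fun j _ => ?_
  rw [← prod_mul_distrib]
  refine prod_congr rfl fun i hi => mul_div_cancel₀ _ (pow_ne_zero 2 (sub_ne_zero.mpr ?_))
  exact ha.ne (mem_Iio.mp hi).ne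

theorem EvalAt_iterShKernel {K : Type} [Field K] (q₁ q₂ : K) {n : ℕ} {g : Fin n → RF K}
    {β : ℕ → K} {a : Fin n → K} (ha : Function.Injective a) (hβ : ∀ i : Fin n, β i = a i)
    {w : Fin n → K} (hg : ∀ i : Fin n, EvalAt K (β ∘ (· + (i : ℕ))) (g i) (w i)) :
    EvalAt K β (iterShKernel q₁ q₂ n g) ((∏ i, w i) *
      ∏ j, ∏ i ∈ Iio j, (a i - q₁ * a j) * (a i - q₂ * a j) / (a i - a j) ^ 2) := by
  refine (EvalAt_prod _ fun i _ => EvalAt_ren _ _ (hg i)).mul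
    (EvalAt_prod _ fun j _ => EvalAt_prod _ fun i hi => ?_)
  rw [← hβ i, ← hβ j]
  exact EvalAt_mu q₁ q₂ (by rw [hβ, hβ]; exact ha.ne (mem_Iio.mp hi).ne)

end Value

/-- for pairwise distinct `α₁, …, α_n` and `f_i(z) = ∏_{j≠i} (z − α_j)`,
the iterated shuffle product `f₁ * ⋯ * f_n` is defined at `(α₁,…,α_n)` with value
`((−1)^{n(n−1)/2}/n!) ∏_{i<j} (α_i − q₁α_j)(α_i − q₂α_j)`; in particular this value is
nonzero whenever `α_i ≠ q₁α_j` and `α_i ≠ q₂α_j` for all `i < j`. -/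
theorem iterSh_value_at_point (K : Type) [Field K] [CharZero K] (q₁ q₂ : K)
    (n : ℕ) (α : Fin n → K) (hα : Function.Injective α) :
    EvalAt K (fun k => if h : k < n then α ⟨k, h⟩ else 0)
      (iterSh K q₁ q₂ (List.ofFn fun i : Fin n =>
        ∏ j ∈ Finset.univ.erase i, (Z K 0 - cst K (α j))))
      (((-1 : K) ^ (n * (n - 1) / 2) / (n.factorial : K)) *
        ∏ j : Fin n, ∏ i ∈ Finset.Iio j, (α i - q₁ * α j) * (α i - q₂ * α j)) ∧
    ((∀ i j : Fin n, i < j → α i ≠ q₁ * α j ∧ α i ≠ q₂ * α j) →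
      ((-1 : K) ^ (n * (n - 1) / 2) / (n.factorial : K)) *
        ∏ j : Fin n, ∏ i ∈ Finset.Iio j, (α i - q₁ * α j) * (α i - q₂ * α j) ≠ 0) := by
  set ᾱ : ℕ → K := fun k => if h : k < n then α ⟨k, h⟩ else 0
  have hpoint (σ : Equiv.Perm (Fin n)) (i : Fin n) : ᾱ (natPerm n σ i) = α (σ i) := by
    simp [ᾱ, natPerm_apply_of_lt σ i.is_lt]
  have hf (σ : Equiv.Perm (Fin n)) (i : Fin n) :
      EvalAt K ((ᾱ ∘ natPerm n σ) ∘ (· + (i : ℕ))) (∏ j ∈ univ.erase i, (Z K 0 - cst K (α j)))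
        (∏ j ∈ univ.erase i, (α (σ i) - α j)) :=
    (EvalAt_prod_Z_zero_sub_cst _ α).congr_value
      (by simp only [Function.comp_apply, zero_add, hpoint])
  refine ⟨?_, fun h => ?_⟩
  · rw [iterSh_ofFn_eq_Alt]
    refine (EvalAt_Alt fun σ => EvalAt_iterShKernel q₁ q₂ (hα.comp σ.injective) (hpoint σ)
      (hf σ)).congr_value ?_
    rw [sum_eq_single 1
      (fun σ _ hσ => by rw [prod_prod_erase_sub_eq_zero α hσ, zero_mul, mul_zero]) (by simp),
      Equiv.Perm.sign_one]
    simp only [Equiv.Perm.coe_one, Function.comp_id, id, Units.val_one, Int.cast_one, one_mul,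
      prod_prod_erase_sub_mul_prod_prod_div hα]
    ring
  · refine mul_ne_zero (div_ne_zero (pow_ne_zero _ (neg_ne_zero.mpr one_ne_zero))
      (Nat.cast_ne_zero.mpr n.factorial_ne_zero)) ?_
    refine prod_ne_zero_iff.mpr fun j _ => prod_ne_zero_iff.mpr fun i hi => ?_
    obtain ⟨h₁, h₂⟩ := h i j (mem_Iio.mp hi)
    exact mul_ne_zero (sub_ne_zero.mpr h₁) (sub_ne_zero.mpr h₂)
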